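/- arXiv:1912.12561 — 4 statements merged into one kernel-verified Lean document; each statement's English description precedes it below -/
import Mathlib

section
/- There exists a universal constant C > 0 such that the following holds. Let f : {-1,1}^n → {0,1} be a Boolean function computed by a decision tree of depth at most d, and let p = Pr_{x uniform in {-1,1}^n}[f(x)=1], with p > 0. Then ∑_{i=1}^{n} |f̂({i})| ≤ C · √d · p · √(ln(e/p)). -/
open scoped BigOperators

/-- A deterministic decision tree over variables indexed by `α`:
each internal node queries a variable (the first subtree is followed when the
variable equals `-1`, i.e. `false`, the second when it equals `1`, i.e. `true`),
and each leaf is labeled by `0` or `1` (encoded as a `Bool`). -/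
inductive DTree (α : Type) : Type where
  | leaf : Bool → DTree α
  | node : α → DTree α → DTree α → DTree α

namespace DTree

/-- Evaluation of a decision tree on an input in `{-1,1}^α`, encoded as a
function `α → Bool` (`true` stands for `1`, `false` for `-1`); the output
`{0,1}` is given as a real number. -/
def eval {α : Type} : DTree α → (α → Bool) → ℝ
  | leaf b, _ => if b then 1 else 0
  | node i t0 t1, x => if x i then t1.eval x else t0.eval x

/-- Depth of a decision tree: the maximal number of internal nodes on a
root-to-leaf path. -/
def depth {α : Type} : DTree α → ℕ
  | leaf _ => 0
  | node _ t0 t1 => 1 + max t0.depth t1.depth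

end DTree

/-- The Fourier coefficient `f̂(S) = 2^{-n} ∑_{x ∈ {-1,1}^n} f(x) ∏_{i ∈ S} x_i`,
for `f` on `{-1,1}^α` encoded as a function on `α → Bool`. -/
noncomputable def booleanFourierCoeff {α : Type} [Fintype α] [DecidableEq α]
    (f : (α → Bool) → ℝ) (S : Finset α) : ℝ :=
  (∑ x : α → Bool, f x * ∏ i ∈ S, (if x i then (1 : ℝ) else -1)) / 2 ^ Fintype.card α

/-- The average of `f` over the uniform distribution on `{-1,1}^α`;
for `{0,1}`-valued `f` this is `Pr[f(x) = 1]`. -/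
noncomputable def uavg {α : Type} [Fintype α] [DecidableEq α]
    (f : (α → Bool) → ℝ) : ℝ :=
  (∑ x : α → Bool, f x) / 2 ^ Fintype.card α

/-!
Let `σ i` be the sign of `f̂({i})`, so that `∑ |f̂({i})| = E[f(x) ∑ σ i x_i]`. A coordinate that
the tree does not query on input `x` can be flipped without changing `f(x)` or the computation
path, so it does not correlate with `f`: the sum equals `E[f · S]`, where `S(x)` sums `σ i x_i`
over the variables queried on the path of `x` (each counted once). Along the tree, `S` is a
martingale with at most `d` increments of size at most one, so `E[exp (l S)] ≤ cosh l ^ d ≤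
exp (d l² / 2)`. Since `f ∈ [0, 1]`, `f S ≤ f s + exp (l (S - s)) / l`; taking expectations and
choosing `s = √(2 d log (e / p))`, `l = s / d` gives the bound with `C = 3`.
-/

namespace BooleanCube

open Function Finset

variable {α : Type}

def chi (b : Bool) : ℝ := if b then 1 else -1

@[simp] lemma chi_true : chi true = 1 := rfl

@[simp] lemma chi_false : chi false = -1 := rfl

lemma sum_update_eq_add_flip [DecidableEq α] (F : (α → Bool) → ℝ) (i : α) (y : α → Bool) :
    ∑ b, F (update y i b) = F y + F (update y i (!y i)) := by
  rw [Fintype.sum_bool]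
  cases h : y i
  · rw [← h, update_eq_self, add_comm]; simp [h]
  · rw [← h, update_eq_self]; simp [h]

variable [Fintype α] [DecidableEq α]

lemma sum_eq_half_sum_update (F : (α → Bool) → ℝ) (i : α) :
    ∑ y, F y = (∑ b, ∑ y, F (update y i b)) / 2 := by
  have flip : Involutive fun y : α → Bool => update y i (!y i) := fun y => by simp
  rw [sum_comm, Fintype.sum_congr _ _ (sum_update_eq_add_flip F i), sum_add_distrib,
    show ∑ y, F (update y i (!y i)) = ∑ y, F y from Equiv.sum_comp flip.toPerm F]
  ring

lemma sum_mul_chi_eq_zero {g : (α → Bool) → ℝ} (i : α) (hg : ∀ y b, g (update y i b) = g y) :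
    ∑ y, g y * chi (y i) = 0 := by
  rw [sum_eq_half_sum_update _ i]
  simp [hg]

lemma sum_mul_booleanFourierCoeff_singleton (f : (α → Bool) → ℝ) (σ : α → ℝ) :
    ∑ i, σ i * booleanFourierCoeff f {i}
      = (∑ y, f y * ∑ i, σ i * chi (y i)) / 2 ^ Fintype.card α := by
  simp only [booleanFourierCoeff, prod_singleton, mul_div_assoc', ← sum_div, mul_sum]
  rw [sum_comm]
  refine congrArg (· / _) (sum_congr rfl fun y _ => sum_congr rfl fun i _ => ?_)
  simp only [chi]
  ring

lemma uavg_le_one {f : (α → Bool) → ℝ} (hf : ∀ y, f y ≤ 1) : uavg f ≤ 1 := by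
  rw [uavg, div_le_one (by positivity)]
  calc ∑ y, f y ≤ ∑ _y : α → Bool, (1 : ℝ) := sum_le_sum fun y _ => hf y
    _ = 2 ^ Fintype.card α := by simp

end BooleanCube

section Estimates

open Real

lemma cosh_mul_le_cosh {s : ℝ} (l : ℝ) (hs : |s| ≤ 1) : cosh (l * s) ≤ cosh l := by
  rw [cosh_le_cosh, abs_mul]
  exact mul_le_of_le_one_right (abs_nonneg l) hs

lemma mul_le_mul_add_exp_div {a : ℝ} (ha : a ∈ Set.Icc 0 1) (u s : ℝ) {l : ℝ} (hl : 0 < l) :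
    a * u ≤ a * s + exp (l * (u - s)) / l := by
  have hexp : u - s ≤ exp (l * (u - s)) / l := by
    rw [le_div_iff₀ hl, mul_comm]
    linarith [add_one_le_exp (l * (u - s))]
  rcases le_total (u - s) 0 with h | h
  · nlinarith [ha.1, exp_pos (l * (u - s)), div_pos (exp_pos (l * (u - s))) hl]
  · nlinarith [ha.1, ha.2]

lemma le_three_mul_sqrt_of_forall_le {X p d : ℝ} (hp0 : 0 < p) (hp1 : p ≤ 1) (hd : 0 < d)
    (h : ∀ s l : ℝ, 0 < l → X ≤ s * p + exp (-(l * s) + d * l ^ 2 / 2) / l) :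
    X ≤ 3 * √d * p * √(log (exp 1 / p)) := by
  set L := log (exp 1 / p) with hL_def
  have hL : 1 ≤ L := by
    rw [hL_def, log_div (exp_ne_zero 1) hp0.ne', log_exp]
    linarith [log_nonpos hp0.le hp1]
  set s := √(2 * d * L) with hs_def
  have hs2 : s ^ 2 = 2 * d * L := sq_sqrt (by positivity)
  have hs : 0 < s := sqrt_pos.mpr (by positivity)
  have hs_le : s ≤ 2 * (√d * √L) := by
    rw [hs_def, sqrt_le_left (by positivity), mul_pow, mul_pow, sq_sqrt hd.le,
      sq_sqrt (by positivity)]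
    nlinarith [mul_nonneg hd.le (zero_le_one.trans hL)]
  -- with `l = s / d` the exponent is `-s² / 2d = -L`
  have hexp : exp (-(s / d * s) + d * (s / d) ^ 2 / 2) = p / exp 1 := by
    rw [show -(s / d * s) + d * (s / d) ^ 2 / 2 = -L by field_simp; linarith, exp_neg, hL_def,
      exp_log (by positivity), inv_div]
  have htail : p / exp 1 / (s / d) ≤ p * s / 2 := by
    rw [div_div_eq_mul_div, div_le_div_iff₀ hs two_pos]
    have : p / exp 1 ≤ p := div_le_self hp0.le (one_le_exp zero_le_one)
    nlinarith [mul_le_mul_of_nonneg_right this (by positivity : (0 : ℝ) ≤ d * 2),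
      mul_nonneg (mul_nonneg hp0.le hd.le) (sub_nonneg.2 hL)]
  calc X ≤ s * p + p / exp 1 / (s / d) := hexp ▸ h s (s / d) (by positivity)
    _ ≤ 3 / 2 * p * s := by linarith
    _ ≤ 3 / 2 * p * (2 * (√d * √L)) := by gcongr
    _ = 3 * √d * p * √L := by ring

end Estimates

namespace DTree

open Function Finset BooleanCube Real

variable {α : Type}

lemma eval_mem_Icc (t : DTree α) (y : α → Bool) : t.eval y ∈ Set.Icc 0 1 := by
  induction t with
  | leaf c => cases c <;> simp [eval]
  | node j t0 t1 ih0 ih1 => by_cases h : y j <;> simp [eval, h, ih0, ih1]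

variable [DecidableEq α]

def queried : DTree α → (α → Bool) → Finset α
  | leaf _, _ => ∅
  | node i t0 t1, y => insert i (if y i then t1.queried y else t0.queried y)

def restrict (i : α) (b : Bool) : DTree α → DTree α
  | leaf c => leaf c
  | node j t0 t1 =>
    if j = i then (if b then t1.restrict i b else t0.restrict i b)
    else node j (t0.restrict i b) (t1.restrict i b)

lemma eval_update_of_notMem_queried {t : DTree α} {y : α → Bool} {i : α}
    (h : i ∉ t.queried y) (b : Bool) : t.eval (update y i b) = t.eval y := by
  induction t with
  | leaf c => rfl
  | node j t0 t1 ih0 ih1 =>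
    simp only [queried, mem_insert, not_or] at h
    rw [eval, eval, update_of_ne (Ne.symm h.1)]
    cases hj : y j <;> simp_all

lemma queried_update_of_notMem_queried {t : DTree α} {y : α → Bool} {i : α}
    (h : i ∉ t.queried y) (b : Bool) : t.queried (update y i b) = t.queried y := by
  induction t with
  | leaf c => rfl
  | node j t0 t1 ih0 ih1 =>
    simp only [queried, mem_insert, not_or] at h
    rw [queried, queried, update_of_ne (Ne.symm h.1)]
    cases hj : y j <;> simp_all

lemma mem_queried_update_iff (t : DTree α) (y : α → Bool) (i : α) (b : Bool) :
    i ∈ t.queried (update y i b) ↔ i ∈ t.queried y := by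
  have key : ∀ y b, i ∉ t.queried y → i ∉ t.queried (update y i b) := fun y b h => by
    rwa [queried_update_of_notMem_queried h]
  refine ⟨not_imp_not.1 (key y b), not_imp_not.1 fun h => ?_⟩
  simpa using key _ (y i) h

lemma depth_restrict_le (t : DTree α) (i : α) (b : Bool) : (t.restrict i b).depth ≤ t.depth := by
  induction t with
  | leaf c => simp [restrict]
  | node j t0 t1 ih0 ih1 =>
    unfold restrict
    split_ifs <;> simp only [depth] <;> omega

lemma queried_restrict (t : DTree α) {y : α → Bool} {i : α} {b : Bool} (h : y i = b) :
    (t.restrict i b).queried y = (t.queried y).erase i := by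
  induction t with
  | leaf c => simp [restrict, queried]
  | node j t0 t1 ih0 ih1 =>
    unfold restrict
    by_cases hj : j = i
    · subst hj; cases b <;> simp_all [queried]
    · by_cases hy : y j <;> simp [queried, hj, hy, erase_insert_of_ne, ih0, ih1]

lemma notMem_queried_restrict (t : DTree α) (y : α → Bool) (i : α) (b : Bool) :
    i ∉ (t.restrict i b).queried y := by
  induction t with
  | leaf c => simp [restrict, queried]
  | node j t0 t1 ih0 ih1 =>
    unfold restrict
    by_cases hj : j = i
    · cases b <;> simp [hj, ih0, ih1]
    · by_cases hy : y j <;> simp [queried, hj, hy, Ne.symm hj, ih0, ih1]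

def pathSum (σ : α → ℝ) (t : DTree α) (y : α → Bool) : ℝ :=
  ∑ i ∈ t.queried y, σ i * chi (y i)

@[simp] lemma pathSum_leaf (σ : α → ℝ) (c : Bool) (y : α → Bool) :
    pathSum σ (leaf c) y = 0 := by
  simp [pathSum, queried]

lemma pathSum_node_of_eq (σ : α → ℝ) (i : α) (t0 t1 : DTree α) {y : α → Bool} {b : Bool}
    (h : y i = b) :
    pathSum σ (node i t0 t1) y
      = σ i * chi b + pathSum σ ((if b then t1 else t0).restrict i b) y := by
  have hQ : (node i t0 t1).queried y = insert i ((if b then t1 else t0).queried y) := by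
    cases b <;> simp [queried, h]
  rw [pathSum, pathSum, hQ, ← add_sum_erase _ _ (mem_insert_self _ _), erase_insert_eq_erase,
    queried_restrict _ h, h]

lemma pathSum_restrict_update (σ : α → ℝ) (t : DTree α) (i : α) (b c : Bool) (y : α → Bool) :
    pathSum σ (t.restrict i b) (update y i c) = pathSum σ (t.restrict i b) y := by
  have hi := notMem_queried_restrict t y i b
  rw [pathSum, pathSum, queried_update_of_notMem_queried hi]
  refine sum_congr rfl fun j hj => ?_
  rw [update_of_ne (ne_of_mem_of_not_mem hj hi)]

variable [Fintype α]

lemma sum_unqueried_eval_mul_chi_eq_zero (t : DTree α) (i : α) :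
    ∑ y, (if i ∈ t.queried y then 0 else t.eval y) * chi (y i) = 0 := by
  refine sum_mul_chi_eq_zero i fun y b => ?_
  by_cases h : i ∈ t.queried y
  · simp [h, mem_queried_update_iff]
  · simp [h, mem_queried_update_iff, eval_update_of_notMem_queried h]

lemma sum_eval_mul_sum_chi_eq_sum_eval_mul_pathSum (σ : α → ℝ) (t : DTree α) :
    ∑ y, t.eval y * ∑ i, σ i * chi (y i) = ∑ y, t.eval y * pathSum σ t y := by
  have split : ∀ y, t.eval y * ∑ i, σ i * chi (y i) = t.eval y * pathSum σ t y +
      ∑ i, σ i * ((if i ∈ t.queried y then 0 else t.eval y) * chi (y i)) := fun y => by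
    rw [pathSum, ← sum_filter_add_sum_filter_not univ (· ∈ t.queried y), filter_mem_eq_inter,
      univ_inter, mul_add, mul_sum, mul_sum, sum_filter]
    congr 1
    refine sum_congr rfl fun i _ => ?_
    split_ifs <;> ring
  rw [Fintype.sum_congr _ _ split, sum_add_distrib, sum_comm]
  simp only [← mul_sum, sum_unqueried_eval_mul_chi_eq_zero, mul_zero, sum_const_zero, add_zero]

lemma sum_exp_pathSum_le {σ : α → ℝ} (hσ : ∀ i, |σ i| ≤ 1) (l : ℝ) (t : DTree α) :
    ∑ y, exp (l * pathSum σ t y) ≤ 2 ^ Fintype.card α * cosh l ^ t.depth := by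
  suffices h : ∀ k, ∀ t : DTree α, t.depth ≤ k →
      ∑ y, exp (l * pathSum σ t y) ≤ 2 ^ Fintype.card α * cosh l ^ k from h _ t le_rfl
  intro k
  induction k with
  | zero =>
    rintro (c | ⟨i, t0, t1⟩) ht
    · simp
    · simp [depth] at ht
  | succ k ih =>
    rintro (c | ⟨i, t0, t1⟩) ht
    · simpa using one_le_pow₀ (one_le_cosh l)
    · have hchild : ∀ b : Bool, ∑ y, exp (l * pathSum σ ((if b then t1 else t0).restrict i b) y)
          ≤ 2 ^ Fintype.card α * cosh l ^ k := fun b => by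
        refine ih _ ((depth_restrict_le _ i b).trans ?_)
        simp only [depth] at ht
        cases b <;> simp <;> omega
      -- the child may query `i` again; restricted to `i := b`, its path sum ignores `y i`
      have hsplit : ∀ b : Bool, ∑ y, exp (l * pathSum σ (node i t0 t1) (update y i b))
          = exp (l * σ i * chi b) *
              ∑ y, exp (l * pathSum σ ((if b then t1 else t0).restrict i b) y) := fun b => by
        rw [mul_sum]
        refine sum_congr rfl fun y _ => ?_
        rw [pathSum_node_of_eq σ i t0 t1 (update_self i b y), pathSum_restrict_update,
          ← exp_add]
        ring_nf
      calc ∑ y, exp (l * pathSum σ (node i t0 t1) y)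
          = (∑ b, exp (l * σ i * chi b) *
              ∑ y, exp (l * pathSum σ ((if b then t1 else t0).restrict i b) y)) / 2 := by
            rw [sum_eq_half_sum_update _ i]
            simp only [hsplit]
        _ ≤ (∑ b, exp (l * σ i * chi b) * (2 ^ Fintype.card α * cosh l ^ k)) / 2 := by
            gcongr with b
            exact hchild b
        _ = cosh (l * σ i) * (2 ^ Fintype.card α * cosh l ^ k) := by
            rw [← sum_mul, Fintype.sum_bool, chi_true, chi_false, mul_one, mul_neg_one,
              cosh_eq (l * σ i)]
            ring
        _ ≤ cosh l * (2 ^ Fintype.card α * cosh l ^ k) := by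
            gcongr
            exact cosh_mul_le_cosh l (hσ i)
        _ = 2 ^ Fintype.card α * cosh l ^ (k + 1) := by ring

lemma sum_eval_mul_pathSum_le {σ : α → ℝ} (hσ : ∀ i, |σ i| ≤ 1) (t : DTree α) {d : ℕ}
    (hd : t.depth ≤ d) (s : ℝ) {l : ℝ} (hl : 0 < l) :
    (∑ y, t.eval y * pathSum σ t y) / 2 ^ Fintype.card α
      ≤ s * uavg t.eval + exp (-(l * s) + d * l ^ 2 / 2) / l := by
  have hmgf : ∑ y, exp (l * pathSum σ t y) ≤ 2 ^ Fintype.card α * exp (d * l ^ 2 / 2) :=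
    calc ∑ y, exp (l * pathSum σ t y) ≤ 2 ^ Fintype.card α * cosh l ^ t.depth :=
          sum_exp_pathSum_le hσ l t
      _ ≤ 2 ^ Fintype.card α * exp (l ^ 2 / 2) ^ d := by
          gcongr
          exact (pow_le_pow_right₀ (one_le_cosh l) hd).trans
            (pow_le_pow_left₀ (cosh_pos l).le (cosh_le_exp_half_sq l) d)
      _ = 2 ^ Fintype.card α * exp (d * l ^ 2 / 2) := by
          rw [← exp_nat_mul]
          ring_nf
  have hsum : ∑ y, t.eval y * pathSum σ t y
      ≤ s * ∑ y, t.eval y + exp (-(l * s)) / l * ∑ y, exp (l * pathSum σ t y) := by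
    rw [mul_sum, mul_sum, ← sum_add_distrib]
    refine sum_le_sum fun y _ => ?_
    have := mul_le_mul_add_exp_div (t.eval_mem_Icc y) (pathSum σ t y) s hl
    rw [mul_sub, sub_eq_neg_add, exp_add] at this
    exact this.trans_eq (by ring)
  rw [div_le_iff₀ (by positivity), uavg, exp_add]
  calc ∑ y, t.eval y * pathSum σ t y
      ≤ s * ∑ y, t.eval y + exp (-(l * s)) / l * (2 ^ Fintype.card α * exp (d * l ^ 2 / 2)) :=
        hsum.trans (by gcongr)
    _ = _ := by field_simp

end DTree

/-- Level-1 inequality for decision trees: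
there is a universal constant `C > 0` such that for every Boolean function
`f : {-1,1}^n → {0,1}` computed by a decision tree of depth at most `d`, with
`p = Pr[f(x) = 1] > 0`, we have `∑_{i} |f̂({i})| ≤ C·√d·p·√(ln(e/p))`. -/
theorem level_one_inequality_decision_trees :
    ∃ C : ℝ, 0 < C ∧
      ∀ (n d : ℕ) (f : (Fin n → Bool) → ℝ) (T : DTree (Fin n)),
        T.depth ≤ d → (∀ x, f x = T.eval x) →
        0 < uavg f →
        ∑ i : Fin n, |booleanFourierCoeff f {i}| ≤
          C * Real.sqrt d * uavg f * Real.sqrt (Real.log (Real.exp 1 / uavg f)) := by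
  refine ⟨3, by norm_num, fun n d f T hdepth hfT hp => ?_⟩
  obtain rfl : f = T.eval := funext hfT
  set σ : Fin n → ℝ := fun i => SignType.sign (booleanFourierCoeff T.eval {i})
  have hσ : ∀ i, |σ i| ≤ 1 := fun i => by
    rcases lt_trichotomy (booleanFourierCoeff T.eval {i}) 0 with h | h | h <;> simp [σ, h]
  have hsum : ∑ i, |booleanFourierCoeff T.eval {i}|
      = (∑ y, T.eval y * T.pathSum σ y) / 2 ^ Fintype.card (Fin n) := by
    simp_rw [← sign_mul_self]
    rw [BooleanCube.sum_mul_booleanFourierCoeff_singleton,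
      DTree.sum_eval_mul_sum_chi_eq_sum_eval_mul_pathSum]
  rw [hsum]
  rcases Nat.eq_zero_or_pos d with rfl | hd
  · cases T with
    | leaf c => simp
    | node => simp [DTree.depth] at hdepth
  · exact le_three_mul_sqrt_of_forall_le hp (BooleanCube.uavg_le_one fun y => (T.eval_mem_Icc y).2)
      (by exact_mod_cast hd) fun s l hl => T.sum_eval_mul_pathSum_le hσ hdepth s hl
end

section
/- Let U ∈ ℝ^{N×N} be an orthogonal matrix, k ≥ 2, and let D_{U,k} be the distribution on {-1,1}^{kN} defined from U. For S ⊆ [kN], write S = S₁ ∪ … ∪ S_k where S_i is the intersection of S with the i-th block of N coordinates, and define D̂_{U,k}(S) = E_{z∼D_{U,k}}[∏_{i∈S} z_i]. Then D̂_{U,k}(S) = Ũ(S₁,S₂) · Ũ(S₂,S₃) ⋯ Ũ(S_{k-1},S_k), where Ũ(S,T) = E_X[ sgn( ∏_{i∈S} X_i · ∏_{j∈T} (UᵀX)_j ) ] for a standard Gaussian vector X in ℝ^N. -/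
open scoped BigOperators
open MeasureTheory

/-- `U : Fin N → Fin N → ℝ` (viewed as an `N × N` real matrix `U i j`) is
orthogonal: its columns and its rows are orthonormal. -/
def IsOrthogonal {N : ℕ} (U : Fin N → Fin N → ℝ) : Prop :=
  (∀ j₁ j₂ : Fin N, ∑ i, U i j₁ * U i j₂ = if j₁ = j₂ then (1 : ℝ) else 0) ∧
  (∀ i₁ i₂ : Fin N, ∑ j, U i₁ j * U i₂ j = if i₁ = i₂ then (1 : ℝ) else 0)

/-- The sign function into `{-1,1}`: `sgn t = 1` if `t ≥ 0`, and `-1` otherwise. -/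
noncomputable def sgn (t : ℝ) : ℝ := if 0 ≤ t then 1 else -1

/-- The standard Gaussian measure on `ℝ^N`. -/
noncomputable def stdGaussianVec (N : ℕ) : MeasureTheory.Measure (Fin N → ℝ) :=
  MeasureTheory.Measure.pi fun _ => ProbabilityTheory.gaussianReal 0 1

/-- The law of `m` independent standard Gaussian vectors in `ℝ^N`. -/
noncomputable def stdGaussianFam (N m : ℕ) :
    MeasureTheory.Measure (Fin m → Fin N → ℝ) :=
  MeasureTheory.Measure.pi fun _ => stdGaussianVec N

/-- Given independent standard Gaussian vectors `X^{(1)},…,X^{(k-1)}` in `ℝ^N`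
(indexed here by `Fin (k-1)`), with `Y^{(i)} = Uᵀ X^{(i)}`, the vectors
`Z^{(1)} = X^{(1)}`, `Z^{(i)} = Y^{(i-1)} ⊙ X^{(i)}` for `2 ≤ i ≤ k-1`, and
`Z^{(k)} = Y^{(k-1)}` (0-indexed below; out-of-range cases give junk `0`). -/
noncomputable def Zfam (N k : ℕ) (U : Fin N → Fin N → ℝ)
    (X : Fin (k - 1) → Fin N → ℝ) : Fin k → Fin N → ℝ := fun a j =>
  if a.val = 0 then
    (if h : 0 < k - 1 then X ⟨0, h⟩ j else 0)
  else if a.val = k - 1 then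
    (if h : k - 2 < k - 1 then ∑ l, U l j * X ⟨k - 2, h⟩ l else 0)
  else
    (if h : a.val - 1 < k - 1 ∧ a.val < k - 1 then
      (∑ l, U l j * X ⟨a.val - 1, h.1⟩ l) * X ⟨a.val, h.2⟩ j
    else 0)

/-- The operator (spectral) norm of a real matrix `A` (given as a function):
`‖A‖ = sup_{x ≠ 0} ‖Ax‖₂ / ‖x‖₂` (and `0` if the index types are empty). -/
noncomputable def opNorm {m n : Type} [Fintype m] [Fintype n]
    (A : m → n → ℝ) : ℝ :=
  sSup {r : ℝ | ∃ x : n → ℝ, x ≠ 0 ∧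
    r = Real.sqrt (∑ i, (∑ j, A i j * x j) ^ 2) / Real.sqrt (∑ j, x j ^ 2)}

/-- The operator norm of the submatrix `U_{S,T}` of `U` with rows indexed by
`S` and columns indexed by `T`. -/
noncomputable def subOpNorm {N : ℕ} (U : Fin N → Fin N → ℝ)
    (S T : Finset (Fin N)) : ℝ :=
  opNorm (fun (i : {a // a ∈ S}) (j : {a // a ∈ T}) => U i.val j.val)

/-- `Ũ(S,T) = E_X[ sgn( ∏_{i∈S} X_i · ∏_{j∈T} (UᵀX)_j ) ]` for a standard
Gaussian vector `X` in `ℝ^N`. -/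
noncomputable def Utilde (N : ℕ) (U : Fin N → Fin N → ℝ)
    (S T : Finset (Fin N)) : ℝ :=
  ∫ X, sgn ((∏ i ∈ S, X i) * ∏ j ∈ T, ∑ l, U l j * X l) ∂(stdGaussianVec N)

/-- `D̂_{U,k}(S) = E_{z ∼ D_{U,k}}[∏_{(a,j) ∈ S} z_{a,j}]`, the `S`-moment of the
distribution `D_{U,k}` of `(sgn(Z^{(1)}),…,sgn(Z^{(k)})) ∈ {-1,1}^{kN}`
(coordinates indexed by `Fin k × Fin N`). -/
noncomputable def Dhat (N k : ℕ) (U : Fin N → Fin N → ℝ)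
    (S : Finset (Fin k × Fin N)) : ℝ :=
  ∫ X, ∏ p ∈ S, sgn (Zfam N k U X p.1 p.2) ∂(stdGaussianFam N (k - 1))

/-- The intersection of `S ⊆ [k] × [N]` with the `m`-th block (0-indexed). -/
def blockOf {N k : ℕ} (S : Finset (Fin k × Fin N)) (m : ℕ) : Finset (Fin N) :=
  (S.filter fun p => p.1.val = m).image Prod.snd

/-!
Almost surely every coordinate of every `X^{(b)}` and of `Y^{(b)} = Uᵀ X^{(b)}` is nonzero: a
nonzero linear form of a standard Gaussian vector is a nondegenerate real Gaussian, which has no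
atoms. On that event `sgn` is multiplicative, and writing `Z = (1, Y^{(1)}, …, Y^{(k-1)}) ⊙
(X^{(1)}, …, X^{(k-1)}, 1)` blockwise, the signs in `∏_{p ∈ S} sgn Z_p` regroup as
`∏_b sgn (∏_{i ∈ S_b} X^{(b)}_i · ∏_{j ∈ S_{b+1}} Y^{(b)}_j)`. The factors depend on the independent
vectors `X^{(b)}` separately, so the expectation splits into the product of the `Ũ(S_b, S_{b+1})`.
-/

open Finset ProbabilityTheory WithLp

lemma sgn_eq_div_abs {t : ℝ} (ht : t ≠ 0) : sgn t = t / |t| := by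
  rcases ht.lt_or_gt with h | h
  · rw [sgn, if_neg h.not_ge, abs_of_neg h, div_neg, div_self ht]
  · rw [sgn, if_pos h.le, abs_of_pos h, div_self ht]

lemma sgn_one : sgn 1 = 1 := if_pos zero_le_one

lemma sgn_mul {a b : ℝ} (ha : a ≠ 0) (hb : b ≠ 0) : sgn (a * b) = sgn a * sgn b := by
  rw [sgn_eq_div_abs ha, sgn_eq_div_abs hb, sgn_eq_div_abs (mul_ne_zero ha hb), abs_mul,
    mul_div_mul_comm]

lemma sgn_prod {ι : Type*} {s : Finset ι} {g : ι → ℝ} (h : ∀ i ∈ s, g i ≠ 0) :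
    sgn (∏ i ∈ s, g i) = ∏ i ∈ s, sgn (g i) := by
  rw [sgn_eq_div_abs (prod_ne_zero_iff.2 h), abs_prod, ← prod_div_distrib]
  exact prod_congr rfl fun i hi => (sgn_eq_div_abs (h i hi)).symm

lemma mem_blockOf {N k : ℕ} {S : Finset (Fin k × Fin N)} {a : Fin k} {j : Fin N} :
    j ∈ blockOf S a ↔ (a, j) ∈ S := by
  simp [blockOf, Fin.val_inj]

lemma prod_eq_prod_blockOf {M : Type*} [CommMonoid M] {N k : ℕ} (S : Finset (Fin k × Fin N))
    (f : Fin k → Fin N → M) : ∏ p ∈ S, f p.1 p.2 = ∏ a : Fin k, ∏ j ∈ blockOf S a, f a j :=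
  prod_finset_product _ _ _ fun p => by simp [mem_blockOf]

lemma Zfam_add_two {N n : ℕ} (U : Fin N → Fin N → ℝ) (X : Fin (n + 1) → Fin N → ℝ) :
    Zfam N (n + 2) U X = Fin.cons 1 (fun b j => ∑ l, U l j * X b l) * Fin.snoc X 1 := by
  ext a j
  induction a using Fin.lastCases with
  | last =>
    rw [Pi.mul_apply, Pi.mul_apply, Fin.snoc_last, ← Fin.succ_last, Fin.cons_succ]
    simp [Zfam, Fin.last]
  | cast a =>
    induction a using Fin.cases with
    | zero => simp [Zfam]
    | succ b =>
      obtain ⟨b, hb⟩ := b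
      rw [Pi.mul_apply, Pi.mul_apply, Fin.snoc_castSucc, ← Fin.succ_castSucc, Fin.cons_succ]
      simp [Zfam, hb, hb.le, hb.ne]

lemma prod_sgn_cons_mul_snoc {ι : Type*} {n : ℕ} (B : ℕ → Finset ι) (X Y : Fin n → ι → ℝ)
    (hX : ∀ b i, X b i ≠ 0) (hY : ∀ b i, Y b i ≠ 0) :
    ∏ a : Fin (n + 1), ∏ j ∈ B a, sgn ((Fin.cons 1 Y * Fin.snoc X 1 : Fin (n + 1) → ι → ℝ) a j) =
      ∏ b : Fin n, sgn ((∏ i ∈ B b, X b i) * ∏ j ∈ B (b + 1), Y b j) := by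
  have hcons : ∀ a j, (Fin.cons 1 Y : Fin (n + 1) → ι → ℝ) a j ≠ 0 := fun a j =>
    Fin.cases (by simp) (fun b => by simpa using hY b j) a
  have hsnoc : ∀ a j, (Fin.snoc X 1 : Fin (n + 1) → ι → ℝ) a j ≠ 0 := fun a j =>
    Fin.lastCases (by simp) (fun b => by simpa using hX b j) a
  calc _ = (∏ a : Fin (n + 1), ∏ j ∈ B a, sgn ((Fin.snoc X 1 : Fin (n + 1) → ι → ℝ) a j)) *
        ∏ a : Fin (n + 1), ∏ j ∈ B a, sgn ((Fin.cons 1 Y : Fin (n + 1) → ι → ℝ) a j) := by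
        simp only [Pi.mul_apply, sgn_mul (hcons _ _) (hsnoc _ _), prod_mul_distrib, mul_comm]
    _ = (∏ b : Fin n, ∏ i ∈ B b, sgn (X b i)) * ∏ b : Fin n, ∏ j ∈ B (b + 1), sgn (Y b j) := by
        rw [Fin.prod_univ_castSucc, Fin.prod_univ_succ]
        simp [sgn_one]
    _ = _ := by
        rw [← prod_mul_distrib]
        refine prod_congr rfl fun b _ => ?_
        rw [sgn_mul (prod_ne_zero_iff.2 fun i _ => hX b i) (prod_ne_zero_iff.2 fun j _ => hY b j),
          sgn_prod fun i _ => hX b i, sgn_prod fun j _ => hY b j]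

lemma prod_sgn_Zfam_add_two {N n : ℕ} (U : Fin N → Fin N → ℝ) (S : Finset (Fin (n + 2) × Fin N))
    (X : Fin (n + 1) → Fin N → ℝ) (hX : ∀ b j, X b j ≠ 0)
    (hY : ∀ b j, ∑ l, U l j * X b l ≠ 0) :
    ∏ p ∈ S, sgn (Zfam N (n + 2) U X p.1 p.2) =
      ∏ b : Fin (n + 1), sgn ((∏ i ∈ blockOf S b, X b i) *
        ∏ j ∈ blockOf S (b + 1), ∑ l, U l j * X b l) := by
  rw [prod_eq_prod_blockOf S fun a j => sgn (Zfam N (n + 2) U X a j), Zfam_add_two]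
  exact prod_sgn_cons_mul_snoc _ _ _ hX hY

instance (N : ℕ) : IsProbabilityMeasure (stdGaussianVec N) := by
  unfold stdGaussianVec; infer_instance

lemma stdGaussianVec_ae_sum_mul_ne_zero {N : ℕ} {c : Fin N → ℝ} (hc : c ≠ 0) :
    ∀ᵐ x ∂stdGaussianVec N, ∑ l, c l * x l ≠ 0 := by
  let L : StrongDual ℝ (EuclideanSpace ℝ (Fin N)) := innerSL ℝ (toLp 2 c)
  have hvar : (Var[L; stdGaussian _]).toNNReal ≠ 0 := by
    rw [variance_dual_stdGaussian, innerSL_apply_norm]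
    simpa using hc
  have := nullSingletonClass_gaussianReal (μ := (stdGaussian _)[L]) hvar
  have hL : (stdGaussian _).map L {0} = 0 := by
    rw [IsGaussian.map_eq_gaussianReal]; exact measure_singleton 0
  rw [ae_iff]
  convert hL using 1
  rw [← map_pi_eq_stdGaussian, Measure.map_map L.continuous.measurable (by fun_prop),
    Measure.map_apply (by fun_prop) (measurableSet_singleton 0)]
  congr 1
  ext x
  simp [L, EuclideanSpace.inner_toLp_toLp, dotProduct, mul_comm]

lemma stdGaussianVec_ae_ne_zero {N : ℕ} (j : Fin N) : ∀ᵐ x ∂stdGaussianVec N, x j ≠ 0 :=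
  (stdGaussianVec_ae_sum_mul_ne_zero (Pi.single_ne_zero_iff.2 one_ne_zero)).mono fun x hx => by
    simpa [Pi.single_apply] using hx

lemma stdGaussianFam_ae_forall {N m : ℕ} {P : (Fin N → ℝ) → Prop}
    (h : ∀ᵐ x ∂stdGaussianVec N, P x) : ∀ᵐ X ∂stdGaussianFam N m, ∀ b, P (X b) :=
  ae_all_iff.2 fun b => Measure.ae_pi_le_pi (Filter.mem_pi_of_mem b h)

lemma IsOrthogonal.col_ne_zero {N : ℕ} {U : Fin N → Fin N → ℝ} (hU : IsOrthogonal U) (j : Fin N) :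
    (fun l => U l j) ≠ 0 := by
  intro h
  simpa [funext_iff.1 h] using hU.1 j j

/-- for an orthogonal `U ∈ ℝ^{N×N}`, `k ≥ 2`, and
`S ⊆ [kN]` with blocks `S₁,…,S_k`,
`D̂_{U,k}(S) = Ũ(S₁,S₂)·Ũ(S₂,S₃)⋯Ũ(S_{k-1},S_k)`. -/
theorem Dhat_eq_prod_Utilde (N k : ℕ) (hk : 2 ≤ k)
    (U : Fin N → Fin N → ℝ) (hU : IsOrthogonal U)
    (S : Finset (Fin k × Fin N)) :
    Dhat N k U S =
      ∏ b : Fin (k - 1), Utilde N U (blockOf S b.val) (blockOf S (b.val + 1)) := by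
  obtain ⟨n, rfl⟩ := Nat.exists_eq_add_of_le' hk
  have hgen : ∀ᵐ x ∂stdGaussianVec N, ∀ j, x j ≠ 0 ∧ ∑ l, U l j * x l ≠ 0 :=
    ae_all_iff.2 fun j => (stdGaussianVec_ae_ne_zero j).and
      (stdGaussianVec_ae_sum_mul_ne_zero (hU.col_ne_zero j))
  calc Dhat N (n + 2) U S
      = ∫ X, ∏ b : Fin (n + 1), sgn ((∏ i ∈ blockOf S b, X b i) *
          ∏ j ∈ blockOf S (b + 1), ∑ l, U l j * X b l) ∂stdGaussianFam N (n + 1) := by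
        refine integral_congr_ae ((stdGaussianFam_ae_forall hgen).mono fun X hX => ?_)
        exact prod_sgn_Zfam_add_two U S X (fun b j => (hX b j).1) (fun b j => (hX b j).2)
    _ = _ := integral_fintype_prod_eq_prod fun (b : Fin (n + 1)) (x : Fin N → ℝ) =>
        sgn ((∏ i ∈ blockOf S b, x i) * ∏ j ∈ blockOf S (b + 1), ∑ l, U l j * x l)
end

section
/- Let k ≥ 2 and let a₁, a₂, …, a_k be real numbers. Then max(a₁,a₂) + max(a₂,a₃) + … + max(a_{k-1},a_k) ≥ (a₁ + a₂ + … + a_k) · (k-1)/k. -/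
/-!
Let `a_m` be a smallest entry. Bounding `max(a_i, a_{i+1})` below by `a_i` for `i < m` and by
`a_{i+1}` for `i ≥ m` picks every entry except `a_m` exactly once, so the sum of the maxima is at
least `S - a_m`, where `S` is the total. Since the minimum is at most the mean, `a_m ≤ S / k`.
-/

open Finset

theorem sum_range_succ_le_add_sum_max {α : Type*} [AddCommMonoid α] [LinearOrder α]
    [IsOrderedAddMonoid α] (f : ℕ → α) {m n : ℕ} (hm : m ≤ n) :
    ∑ i ∈ range (n + 1), f i ≤ f m + ∑ i ∈ range n, max (f i) (f (i + 1)) := by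
  induction n with
  | zero => simp [Nat.le_zero.mp hm]
  | succ n ih =>
    rcases hm.lt_or_eq with hm | rfl
    · calc ∑ i ∈ range (n + 2), f i = ∑ i ∈ range (n + 1), f i + f (n + 1) := sum_range_succ ..
        _ ≤ (f m + ∑ i ∈ range n, max (f i) (f (i + 1))) + max (f n) (f (n + 1)) :=
          add_le_add (ih (Nat.lt_succ_iff.mp hm)) (le_max_right ..)
        _ = f m + ∑ i ∈ range (n + 1), max (f i) (f (i + 1)) := by
          rw [sum_range_succ, add_assoc]
    · rw [sum_range_succ, add_comm]
      gcongr with i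
      exact le_max_left ..

theorem sum_range_succ_mul_div_le_sum_max (f : ℕ → ℝ) (n : ℕ) :
    (∑ i ∈ range (n + 1), f i) * n / (n + 1) ≤ ∑ i ∈ range n, max (f i) (f (i + 1)) := by
  obtain ⟨m, hm, hmin⟩ := exists_min_image (range (n + 1)) f nonempty_range_add_one
  have h_min_le_mean : (n + 1) * f m ≤ ∑ i ∈ range (n + 1), f i := by
    simpa using card_nsmul_le_sum _ f (f m) hmin
  have h_sum_le := sum_range_succ_le_add_sum_max f (Nat.lt_succ_iff.mp (mem_range.mp hm))
  rw [div_le_iff₀ (by positivity)]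
  nlinarith

/-- for reals `a₁, …, a_k` (`k ≥ 2`),
`max(a₁,a₂) + max(a₂,a₃) + … + max(a_{k-1},a_k) ≥ (a₁ + ⋯ + a_k)·(k-1)/k`. -/
theorem sum_max_consecutive_ge (k : ℕ) (hk : 2 ≤ k) (a : Fin k → ℝ) :
    (∑ i, a i) * (k - 1) / k ≤
      ∑ b : Fin (k - 1),
        max (a ⟨b.val, lt_of_lt_of_le b.isLt (Nat.sub_le k 1)⟩)
          (a ⟨b.val + 1, by have := b.isLt; omega⟩) := by
  set f : ℕ → ℝ := fun i => if h : i < k then a ⟨i, h⟩ else 0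
  have h_sum : ∑ i, a i = ∑ i ∈ range k, f i := by
    rw [← Fin.sum_univ_eq_sum_range]
    simp [f]
  have h_sum_max : ∑ b : Fin (k - 1),
      max (a ⟨b.val, lt_of_lt_of_le b.isLt (Nat.sub_le k 1)⟩)
        (a ⟨b.val + 1, by have := b.isLt; omega⟩) =
      ∑ i ∈ range (k - 1), max (f i) (f (i + 1)) := by
    rw [← Fin.sum_univ_eq_sum_range (fun i => max (f i) (f (i + 1)))]
    refine sum_congr rfl fun b _ => ?_
    simp [f, show b.val + 1 < k by omega, show b.val < k by omega]
  have h := sum_range_succ_mul_div_le_sum_max f (k - 1)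
  rw [Nat.sub_add_cancel (by omega), Nat.cast_pred (by omega), sub_add_cancel] at h
  rwa [h_sum, h_sum_max]
end

section
/- Let N ≥ 1, let U be a random matrix drawn from the Haar (uniform) probability measure on the orthogonal group O(N), let x, y ∈ ℝ^N be fixed unit vectors, and let t > 0. Then Pr[ xᵀ·U·y ≥ t/√N ] ≤ 2·e^{-t²/8}. -/
open scoped BigOperators
open MeasureTheory

open Matrix Finset Real

/-!
For a sign vector `ε ∈ {±1}ᴺ`, the vector `z = ε / √N` is a unit vector, and left invariance
(under the reflection exchanging `z` and `x`) shows that `zᵀU` and `xᵀU` have the same law. Hence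
`P(xᵀUy ≥ t/√N)` equals the average over `ε` of `P(εᵀUy ≥ t)`, i.e. the expected fraction of sign
vectors with `εᵀv ≥ t`, where `v = Uy` is a unit vector for orthogonal `U`. The Chernoff bound with
`cosh s ≤ exp (s²/2)` bounds that fraction by `exp (-t²/2)` for every unit `v`.
-/

open Classical in
theorem sum_measure_le_of_ae_card_le {α ι : Type*} [MeasurableSpace α] {μ : Measure α}
    [IsProbabilityMeasure μ] (s : Finset ι) {A : ι → Set α} (hA : ∀ i ∈ s, MeasurableSet (A i))
    {K : ENNReal} (hK : ∀ᵐ a ∂μ, (#{i ∈ s | a ∈ A i} : ENNReal) ≤ K) :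
    ∑ i ∈ s, μ (A i) ≤ K := by
  calc ∑ i ∈ s, μ (A i) = ∫⁻ a, ∑ i ∈ s, (A i).indicator 1 a ∂μ := by
        rw [lintegral_finsetSum _ fun i hi => measurable_one.indicator (hA i hi)]
        exact sum_congr rfl fun i hi => (lintegral_indicator_one (hA i hi)).symm
    _ = ∫⁻ a, (#{i ∈ s | a ∈ A i} : ENNReal) ∂μ := by
        simp [Set.indicator_apply, sum_boole]
    _ ≤ ∫⁻ _, K ∂μ := lintegral_mono_ae hK
    _ = K := by simp

section

variable {n : Type*} [Fintype n]

def signVec (ε : n → Bool) : n → ℝ := fun i => if ε i then 1 else -1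

theorem signVec_dotProduct_self (ε : n → Bool) : signVec ε ⬝ᵥ signVec ε = Fintype.card n := by
  simp [signVec, dotProduct, apply_ite (fun a : ℝ => a * a)]

theorem inv_sqrt_card_smul_signVec_dotProduct_self [Nonempty n] (ε : n → Bool) :
    ((√(Fintype.card n))⁻¹ • signVec ε) ⬝ᵥ ((√(Fintype.card n))⁻¹ • signVec ε) = 1 := by
  rw [smul_dotProduct, dotProduct_smul, signVec_dotProduct_self, smul_eq_mul, smul_eq_mul,
    ← mul_assoc, ← mul_inv, mul_self_sqrt (Nat.cast_nonneg _), inv_mul_cancel₀ (by positivity)]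

theorem sum_exp_mul_signVec_dotProduct [DecidableEq n] (v : n → ℝ) (s : ℝ) :
    ∑ ε : n → Bool, exp (s * (signVec ε ⬝ᵥ v)) = ∏ i, 2 * cosh (s * v i) := by
  calc ∑ ε : n → Bool, exp (s * (signVec ε ⬝ᵥ v))
      = ∑ ε : n → Bool, ∏ i, exp (signVec ε i * (s * v i)) := by
        simp_rw [dotProduct, mul_sum, exp_sum, mul_left_comm]
    _ = ∏ i, ∑ b : Bool, exp ((if b then 1 else -1) * (s * v i)) := by
        rw [prod_univ_sum, Fintype.piFinset_univ]; rfl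
    _ = ∏ i, 2 * cosh (s * v i) := by
        simp [cosh_eq, mul_div_cancel₀]

theorem sum_exp_mul_signVec_dotProduct_le [DecidableEq n] (v : n → ℝ) (s : ℝ) :
    ∑ ε : n → Bool, exp (s * (signVec ε ⬝ᵥ v)) ≤
      2 ^ Fintype.card n * exp (s ^ 2 * (v ⬝ᵥ v) / 2) := by
  rw [sum_exp_mul_signVec_dotProduct]
  calc ∏ i, 2 * cosh (s * v i) ≤ ∏ i, 2 * exp ((s * v i) ^ 2 / 2) :=
        prod_le_prod (fun i _ => by positivity) fun i _ =>
          mul_le_mul_of_nonneg_left (cosh_le_exp_half_sq _) zero_le_two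
    _ = 2 ^ Fintype.card n * exp (s ^ 2 * (v ⬝ᵥ v) / 2) := by
        rw [prod_mul_distrib, prod_const, card_univ, ← exp_sum, dotProduct, mul_sum, sum_div]
        congr 3 with i
        ring

theorem card_filter_le_signVec_dotProduct_le [DecidableEq n] {v : n → ℝ} (hv : v ⬝ᵥ v = 1) {t : ℝ}
    (ht : 0 ≤ t) :
    (#{ε : n → Bool | t ≤ signVec ε ⬝ᵥ v} : ℝ) ≤ 2 ^ Fintype.card n * exp (-t ^ 2 / 2) := by
  set A := ({ε : n → Bool | t ≤ signVec ε ⬝ᵥ v} : Finset _)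
  have hchernoff : (#A : ℝ) * exp (t ^ 2) ≤ ∑ ε, exp (t * (signVec ε ⬝ᵥ v)) :=
    calc (#A : ℝ) * exp (t ^ 2) = ∑ ε ∈ A, exp (t ^ 2) := by rw [sum_const, nsmul_eq_mul]
      _ ≤ ∑ ε ∈ A, exp (t * (signVec ε ⬝ᵥ v)) := sum_le_sum fun ε hε =>
          exp_le_exp.2 (by rw [sq]; exact mul_le_mul_of_nonneg_left (mem_filter.1 hε).2 ht)
      _ ≤ ∑ ε, exp (t * (signVec ε ⬝ᵥ v)) :=
          sum_le_sum_of_subset_of_nonneg (filter_subset _ _) fun _ _ _ => (exp_pos _).le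
  have hbound := hchernoff.trans (sum_exp_mul_signVec_dotProduct_le v t)
  rw [hv, mul_one, ← le_div_iff₀ (exp_pos _), mul_div_assoc, ← exp_sub] at hbound
  refine hbound.trans_eq ?_
  congr 2
  ring

theorem Matrix.exists_mem_orthogonalGroup_mulVec_eq [DecidableEq n]
    {x z : n → ℝ} (h : x ⬝ᵥ x = z ⬝ᵥ z) : ∃ V ∈ orthogonalGroup n ℝ, V *ᵥ x = z := by
  let b := EuclideanSpace.basisFun n ℝ
  have hnorm : ‖WithLp.toLp 2 x‖ = ‖WithLp.toLp 2 z‖ := by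
    simp only [EuclideanSpace.norm_eq, Real.norm_eq_abs, sq_abs]
    simp only [dotProduct, ← sq] at h
    rw [h]
  let R := (ℝ ∙ (WithLp.toLp 2 x - WithLp.toLp 2 z))ᗮ.reflection
  refine ⟨R.toLinearMap.toMatrix b.toBasis b.toBasis, R.toMatrix_mem_unitaryGroup b b, ?_⟩
  have := LinearMap.toMatrix_mulVec_repr b.toBasis b.toBasis R.toLinearMap (WithLp.toLp 2 x)
  exact this.trans (congrArg (fun v => ⇑(b.toBasis.repr v)) (Submodule.reflection_sub hnorm))

theorem Matrix.mulVec_dotProduct_mulVec_of_mem_orthogonalGroup [DecidableEq n]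
    {U : Matrix n n ℝ} (hU : U ∈ orthogonalGroup n ℝ) (y : n → ℝ) :
    U *ᵥ y ⬝ᵥ U *ᵥ y = y ⬝ᵥ y := by
  rw [dotProduct_mulVec, ← mulVec_transpose, mulVec_mulVec, (mem_orthogonalGroup_iff' _ _).1 hU,
    one_mulVec]

theorem measurable_vecMul_of (x : n → ℝ) : Measurable fun U : n → n → ℝ => x ᵥ* of U := by
  unfold vecMul dotProduct
  fun_prop

theorem map_vecMul_eq_of_dotProduct_self_eq [DecidableEq n] {μ : Measure (n → n → ℝ)}
    (hinv : ∀ V ∈ orthogonalGroup n ℝ, μ.map (fun U i j => ∑ l, V i l * U l j) = μ)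
    {x z : n → ℝ} (h : x ⬝ᵥ x = z ⬝ᵥ z) :
    μ.map (fun U => x ᵥ* of U) = μ.map (fun U => z ᵥ* of U) := by
  obtain ⟨V, hV, rfl⟩ := exists_mem_orthogonalGroup_mulVec_eq h.symm
  conv_rhs => rw [← hinv Vᵀ (transpose_mem_unitaryGroup_iff.2 hV)]
  rw [Measure.map_map (measurable_vecMul_of z) (by fun_prop)]
  congr 1
  ext U : 1
  rw [← vecMul_transpose, vecMul_vecMul]
  rfl

theorem measure_setOf_le_dotProduct_mulVec_congr [DecidableEq n] {μ : Measure (n → n → ℝ)}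
    (hinv : ∀ V ∈ orthogonalGroup n ℝ, μ.map (fun U i j => ∑ l, V i l * U l j) = μ)
    {x z : n → ℝ} (h : x ⬝ᵥ x = z ⬝ᵥ z) (y : n → ℝ) (c : ℝ) :
    μ {U | c ≤ x ⬝ᵥ of U *ᵥ y} = μ {U | c ≤ z ⬝ᵥ of U *ᵥ y} := by
  have hmeas : MeasurableSet {v : n → ℝ | c ≤ v ⬝ᵥ y} :=
    measurableSet_le measurable_const (by fun_prop)
  have hpre : ∀ w : n → ℝ, {U | c ≤ w ⬝ᵥ of U *ᵥ y} = (fun U => w ᵥ* of U) ⁻¹' {v | c ≤ v ⬝ᵥ y} :=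
    fun w => by simp [dotProduct_mulVec]
  rw [hpre, hpre, ← Measure.map_apply (measurable_vecMul_of x) hmeas,
    ← Measure.map_apply (measurable_vecMul_of z) hmeas, map_vecMul_eq_of_dotProduct_self_eq hinv h]

theorem measure_setOf_le_dotProduct_mulVec_le [DecidableEq n] {μ : Measure (n → n → ℝ)}
    [IsProbabilityMeasure μ] (horth : ∀ᵐ U ∂μ, of U ∈ orthogonalGroup n ℝ)
    (hinv : ∀ V ∈ orthogonalGroup n ℝ, μ.map (fun U i j => ∑ l, V i l * U l j) = μ)
    {x y : n → ℝ} (hx : x ⬝ᵥ x = 1) (hy : y ⬝ᵥ y = 1) {t : ℝ} (ht : 0 ≤ t) :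
    μ {U | t / √(Fintype.card n) ≤ x ⬝ᵥ of U *ᵥ y} ≤ ENNReal.ofReal (exp (-t ^ 2 / 2)) := by
  have : Nonempty n := by
    by_contra h
    simp [not_nonempty_iff.1 h, dotProduct] at hx
  have hcard : 0 < √(Fintype.card n) := by simp [Fintype.card_pos]
  set z : (n → Bool) → n → ℝ := fun ε => (√(Fintype.card n))⁻¹ • signVec ε
  have hz : ∀ ε, z ε ⬝ᵥ z ε = x ⬝ᵥ x := fun ε =>
    (inv_sqrt_card_smul_signVec_dotProduct_self ε).trans hx.symm
  set E : (n → Bool) → Set (n → n → ℝ) := fun ε => {U | t / √(Fintype.card n) ≤ z ε ⬝ᵥ of U *ᵥ y}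
  have hE : ∀ U ε, U ∈ E ε ↔ t ≤ signVec ε ⬝ᵥ of U *ᵥ y := fun U ε => by
    simp [E, z, smul_dotProduct, div_le_iff₀' hcard]
  have hcount : ∀ᵐ U ∂μ, (#{ε ∈ univ | U ∈ E ε} : ENNReal) ≤
      ENNReal.ofReal (2 ^ Fintype.card n * exp (-t ^ 2 / 2)) := by
    filter_upwards [horth] with U hU
    simp_rw [hE]
    rw [← ENNReal.ofReal_natCast]
    exact ENNReal.ofReal_le_ofReal <| card_filter_le_signVec_dotProduct_le
      ((mulVec_dotProduct_mulVec_of_mem_orthogonalGroup hU y).trans hy) ht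
  have hEx : ∀ ε, μ (E ε) = μ {U | t / √(Fintype.card n) ≤ x ⬝ᵥ of U *ᵥ y} := fun ε =>
    measure_setOf_le_dotProduct_mulVec_congr hinv (hz ε) y _
  have hmeas : ∀ ε ∈ univ, MeasurableSet (E ε) := fun ε _ =>
    measurableSet_le measurable_const (by unfold dotProduct mulVec; fun_prop)
  have hsum := sum_measure_le_of_ae_card_le univ hmeas hcount
  simp_rw [hEx, sum_const, card_univ, Fintype.card_fun, Fintype.card_bool, nsmul_eq_mul,
    Nat.cast_pow, Nat.cast_ofNat] at hsum
  rw [ENNReal.ofReal_mul (by positivity), ENNReal.ofReal_pow zero_le_two,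
    ENNReal.ofReal_ofNat] at hsum
  exact (ENNReal.mul_le_mul_iff_right (by simp) (by simp)).1 hsum

end

theorem isOrthogonal_iff_mem_orthogonalGroup {N : ℕ} (U : Fin N → Fin N → ℝ) :
    IsOrthogonal U ↔ of U ∈ orthogonalGroup (Fin N) ℝ := by
  have hcols : (∀ j₁ j₂ : Fin N, ∑ i, U i j₁ * U i j₂ = if j₁ = j₂ then (1 : ℝ) else 0) ↔
      (of U)ᵀ * of U = 1 := by
    simp [← Matrix.ext_iff, mul_apply, one_apply]
  have hrows : (∀ i₁ i₂ : Fin N, ∑ j, U i₁ j * U i₂ j = if i₁ = i₂ then (1 : ℝ) else 0) ↔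
      of U * (of U)ᵀ = 1 := by
    simp [← Matrix.ext_iff, mul_apply, one_apply]
  rw [IsOrthogonal, hcols, hrows, ← mem_orthogonalGroup_iff', ← mem_orthogonalGroup_iff, and_self]

theorem sum_sum_mul_mul_eq_dotProduct_mulVec {n : Type*} [Fintype n] (x y : n → ℝ)
    (U : n → n → ℝ) : ∑ i, ∑ j, x i * U i j * y j = x ⬝ᵥ of U *ᵥ y := by
  simp [dotProduct, mulVec, mul_sum, mul_assoc]

theorem haar_bilinear_tail_bound_general (N : ℕ)
    (μ : Measure (Fin N → Fin N → ℝ)) (hprob : IsProbabilityMeasure μ)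
    (horth : ∀ᵐ U ∂μ, IsOrthogonal U)
    (hinv : ∀ V : Fin N → Fin N → ℝ, IsOrthogonal V →
      μ.map (fun U => fun i j => ∑ l, V i l * U l j) = μ)
    (x y : Fin N → ℝ) (hx : ∑ i, x i ^ 2 = 1) (hy : ∑ j, y j ^ 2 = 1)
    (t : ℝ) (ht : 0 < t) :
    (μ {U | t / Real.sqrt N ≤ ∑ i, ∑ j, x i * U i j * y j}).toReal ≤
      2 * Real.exp (-t ^ 2 / 8) := by
  have hdot : ∀ v : Fin N → ℝ, ∑ i, v i ^ 2 = v ⬝ᵥ v := fun v => by simp [dotProduct, sq]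
  have hmain := measure_setOf_le_dotProduct_mulVec_le
    (horth.mono fun U hU => (isOrthogonal_iff_mem_orthogonalGroup U).1 hU)
    (fun V hV => hinv V ((isOrthogonal_iff_mem_orthogonalGroup V).2 hV))
    ((hdot x).symm.trans hx) ((hdot y).symm.trans hy) ht.le
  simp_rw [Fintype.card_fin, ← sum_sum_mul_mul_eq_dotProduct_mulVec] at hmain
  calc _ ≤ exp (-t ^ 2 / 2) := ENNReal.toReal_le_of_le_ofReal (exp_pos _).le hmain
    _ ≤ 2 * exp (-t ^ 2 / 8) := by
      have := exp_le_exp.2 (show -t ^ 2 / 2 ≤ -t ^ 2 / 8 by nlinarith [sq_nonneg t])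
      linarith [exp_pos (-t ^ 2 / 8)]

/-- let `μ` be the Haar probability measure on the orthogonal
group `O(N)` (formalized, via its characterizing properties, as any Borel
probability measure on `N × N` real matrices that is concentrated on orthogonal
matrices and invariant under left multiplication by every orthogonal matrix).
For fixed unit vectors `x, y ∈ ℝ^N` and `t > 0`,
`Pr_{U ∼ μ}[ xᵀUy ≥ t/√N ] ≤ 2·e^{-t²/8}`. -/
theorem haar_bilinear_tail_bound (N : ℕ) (hN : 1 ≤ N)
    (μ : Measure (Fin N → Fin N → ℝ)) (hprob : IsProbabilityMeasure μ)
    (horth : ∀ᵐ U ∂μ, IsOrthogonal U)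
    (hinv : ∀ V : Fin N → Fin N → ℝ, IsOrthogonal V →
      μ.map (fun U => fun i j => ∑ l, V i l * U l j) = μ)
    (x y : Fin N → ℝ) (hx : ∑ i, x i ^ 2 = 1) (hy : ∑ j, y j ^ 2 = 1)
    (t : ℝ) (ht : 0 < t) :
    (μ {U | t / Real.sqrt N ≤ ∑ i, ∑ j, x i * U i j * y j}).toReal ≤
      2 * Real.exp (-t ^ 2 / 8) :=
  haar_bilinear_tail_bound_general N μ hprob horth hinv x y hx hy t ht
end
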